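/- arXiv:2205.12637 — 5 statements merged into one kernel-verified Lean document; each statement's English description precedes it below -/
import Mathlib

section
/- Let d ≥ 1, let a = diag(a_1, …, a_d, a_1^{−1}, …, a_d^{−1}) with all a_i > 0, and let r ∈ {1, …, 2d}. For any r linearly independent vectors x_1, …, x_r ∈ a ℤ^{2d}, the covolume ‖x_1 ∧ ⋯ ∧ x_r‖ of the subgroup they span is at least the product of the r smallest numbers in the multiset {a_1, …, a_d, a_1^{−1}, …, a_d^{−1}}; moreover this lower bound is attained by the integer span of the r columns of a corresponding to those r smallest diagonal entries. In other words, among all rank-r subgroups of a ℤ^{2d}, the one of smallest covolume is the integer span of r distinct columns of a. -/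
/- Statement 8: among all rank-r subgroups of the lattice aℤ^{2d} generated by a positive
   diagonal symplectic matrix a = diag(v_1,…,v_d,v_1⁻¹,…,v_d⁻¹), the smallest covolume
   (= norm of the wedge product / square root of the Gram determinant) is the product of
   the r smallest diagonal entries, attained by the integer span of the corresponding r
   columns of a. -/

open Matrix

abbrev Mat (d : ℕ) := Matrix (Fin d ⊕ Fin d) (Fin d ⊕ Fin d) ℝ

/-- The lattice `B ℤ^{2d}` spanned by the columns of the matrix `B`. -/
noncomputable def latticeSet {d : ℕ} (B : Mat d) : Set (Fin d ⊕ Fin d → ℝ) :=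
  {v | ∃ m : Fin d ⊕ Fin d → ℤ, v = B.mulVec fun i => (m i : ℝ)}

/-- The diagonal symplectic matrix `diag(v_1, …, v_d, v_1⁻¹, …, v_d⁻¹)`. -/
noncomputable def aDiag {d : ℕ} (v : Fin d → ℝ) : Mat d :=
  Matrix.fromBlocks (Matrix.diagonal v) 0 0 (Matrix.diagonal fun i => (v i)⁻¹)

/-- The covolume `‖x_1 ∧ ⋯ ∧ x_r‖` (square root of the Gram determinant, w.r.t. the
Euclidean inner product) of the ℤ-span of `x_1, …, x_r` inside its real span. -/
noncomputable def covolSpec {d : ℕ} (r : ℕ) (x : Fin r → (Fin d ⊕ Fin d → ℝ)) : ℝ :=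
  Real.sqrt (Matrix.det (Matrix.of fun i j => ∑ k, x i k * x j k))

section CBaux
open Finset Equiv

theorem cb_step1 {n : Type*} [Fintype n] [DecidableEq n] {r : ℕ}
    (M : Matrix (Fin r) n ℝ) (dv : n → ℝ) :
    (M * Matrix.diagonal dv * Mᵀ).det
      = ∑ f : Fin r → n, (∏ i, dv (f i) * M i (f i)) * (M.submatrix id f).det := by
  have hent : ∀ p q, (M * Matrix.diagonal dv * Mᵀ) p q = ∑ k, M p k * dv k * M q k := by
    intro p q
    simp only [Matrix.mul_apply, Matrix.transpose_apply]
    refine Finset.sum_congr rfl fun k _ => ?_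
    rw [Finset.sum_eq_single k (fun j _ hj => by simp [Matrix.diagonal_apply_ne _ hj]) (by simp)]
    simp [Matrix.diagonal_apply_eq]
  calc (M * Matrix.diagonal dv * Mᵀ).det
      = ∑ σ : Perm (Fin r), Equiv.Perm.sign σ * ∏ i, ∑ k, M (σ i) k * dv k * M i k := by
        simp [Matrix.det_apply', hent]
    _ = ∑ σ : Perm (Fin r), Equiv.Perm.sign σ *
          ∑ f : Fin r → n, ∏ i, M (σ i) (f i) * dv (f i) * M i (f i) := by
        refine Finset.sum_congr rfl fun σ _ => ?_
        rw [Finset.prod_univ_sum]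
        simp
    _ = ∑ f : Fin r → n, ∑ σ : Perm (Fin r),
          Equiv.Perm.sign σ * ∏ i, M (σ i) (f i) * dv (f i) * M i (f i) := by
        simp_rw [Finset.mul_sum]; rw [Finset.sum_comm]
    _ = ∑ f : Fin r → n, (∏ i, dv (f i) * M i (f i)) * (M.submatrix id f).det := by
        refine Finset.sum_congr rfl fun f _ => ?_
        rw [Matrix.det_apply', Finset.mul_sum]
        refine Finset.sum_congr rfl fun σ _ => ?_
        simp only [Matrix.submatrix_apply, id_eq]
        rw [Finset.prod_congr rfl (fun i _ => by ring :
          ∀ i ∈ Finset.univ, M (σ i) (f i) * dv (f i) * M i (f i)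
            = (dv (f i) * M i (f i)) * M (σ i) (f i)), Finset.prod_mul_distrib]
        ring

theorem cb_sigma_sum {n : Type*} [Fintype n] [DecidableEq n] {r : ℕ}
    (M : Matrix (Fin r) n ℝ) (dv : n → ℝ) (g : Fin r → n) (hg : Function.Injective g) :
    ∑ σ : Equiv.Perm (Fin r),
        (∏ i, dv ((g ∘ σ) i) * M i ((g ∘ σ) i)) * (M.submatrix id (g ∘ σ)).det
      = (∏ i, dv (g i)) * (M.submatrix id g).det ^ 2 := by
  have key : ∀ σ : Equiv.Perm (Fin r),
      (∏ i, dv ((g ∘ σ) i) * M i ((g ∘ σ) i)) * (M.submatrix id (g ∘ σ)).det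
        = (∏ i, dv (g i)) * (M.submatrix id g).det *
            ((Equiv.Perm.sign σ : ℝ) * ∏ i, (M.submatrix id g) i (σ i)) := by
    intro σ
    have h1 : M.submatrix id (g ∘ σ) = (M.submatrix id g).submatrix id σ := by
      ext i j; simp
    rw [h1, Matrix.det_permute']
    rw [Finset.prod_mul_distrib]
    have h2 : ∏ i, dv ((g ∘ σ) i) = ∏ i, dv (g i) := Equiv.prod_comp σ (fun i => dv (g i))
    have h3 : ∀ i, M i ((g ∘ σ) i) = (M.submatrix id g) i (σ i) := fun i => rfl
    simp_rw [h2, h3]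
    ring
  rw [Finset.sum_congr rfl (fun σ _ => key σ), ← Finset.mul_sum]
  have h4 : ∑ σ : Equiv.Perm (Fin r),
      (Equiv.Perm.sign σ : ℝ) * ∏ i, (M.submatrix id g) i (σ i)
        = (M.submatrix id g)ᵀ.det := by
    rw [Matrix.det_apply']
    simp [Matrix.transpose_apply]
  rw [h4, Matrix.det_transpose]
  ring

theorem cb_diag {n : Type*} [Fintype n] [DecidableEq n] {r : ℕ}
    (M : Matrix (Fin r) n ℝ) (dv : n → ℝ)
    (en : ∀ T : Finset n, T.card = r → (Fin r → n))
    (hinj : ∀ T hT, Function.Injective (en T hT))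
    (hmem : ∀ T hT i, en T hT i ∈ T) :
    (M * Matrix.diagonal dv * Mᵀ).det
      = ∑ T ∈ (Finset.powersetCard r (Finset.univ : Finset n)).attach,
          (∏ k ∈ T.1, dv k) *
            (M.submatrix id (en T.1 (Finset.mem_powersetCard_univ.mp T.2))).det ^ 2 := by
  classical
  -- image of en is T
  have himg : ∀ (T : Finset n) (hT : T.card = r),
      Finset.image (en T hT) Finset.univ = T := by
    intro T hT
    refine Finset.eq_of_subset_of_card_le (fun a ha => ?_) ?_
    · obtain ⟨i, _, rfl⟩ := Finset.mem_image.mp ha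
      exact hmem T hT i
    · rw [Finset.card_image_of_injective _ (hinj T hT), Finset.card_univ, Fintype.card_fin]
      exact hT.le
  rw [cb_step1]
  -- drop non-injective f
  rw [← Finset.sum_filter_add_sum_filter_not Finset.univ (fun f => Function.Injective f)]
  have hzero : ∑ f ∈ Finset.univ.filter (fun f : Fin r → n => ¬ Function.Injective f),
      (∏ i, dv (f i) * M i (f i)) * (M.submatrix id f).det = 0 := by
    refine Finset.sum_eq_zero fun f hf => ?_
    rw [Finset.mem_filter] at hf
    simp only [Function.Injective] at hf
    push_neg at hf
    obtain ⟨i, j, hij, hne⟩ := hf.2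
    rw [Matrix.det_zero_of_column_eq hne (fun k => by simp [hij]), mul_zero]
  rw [hzero, add_zero]
  -- reindex by (T, σ)
  refine Eq.symm ?_
  calc ∑ T ∈ (Finset.powersetCard r (Finset.univ : Finset n)).attach,
          (∏ k ∈ T.1, dv k) *
            (M.submatrix id (en T.1 (Finset.mem_powersetCard_univ.mp T.2))).det ^ 2
      = ∑ T ∈ (Finset.powersetCard r (Finset.univ : Finset n)).attach,
          ∑ σ : Equiv.Perm (Fin r),
            (∏ i, dv ((en T.1 (Finset.mem_powersetCard_univ.mp T.2) ∘ σ) i)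
              * M i ((en T.1 (Finset.mem_powersetCard_univ.mp T.2) ∘ σ) i)) *
            (M.submatrix id (en T.1 (Finset.mem_powersetCard_univ.mp T.2) ∘ σ)).det := by
        refine Finset.sum_congr rfl fun T _ => ?_
        rw [cb_sigma_sum M dv _ (hinj T.1 _)]
        congr 1
        conv_lhs => rw [← himg T.1 (Finset.mem_powersetCard_univ.mp T.2)]
        rw [Finset.prod_image (fun a _ b _ h => hinj T.1 _ h)]
    _ = ∑ p ∈ (Finset.powersetCard r (Finset.univ : Finset n)).attach ×ˢ
            (Finset.univ : Finset (Equiv.Perm (Fin r))),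
          (∏ i, dv ((en p.1.1 (Finset.mem_powersetCard_univ.mp p.1.2) ∘ p.2) i)
            * M i ((en p.1.1 (Finset.mem_powersetCard_univ.mp p.1.2) ∘ p.2) i)) *
          (M.submatrix id (en p.1.1 (Finset.mem_powersetCard_univ.mp p.1.2) ∘ p.2)).det := by
        rw [Finset.sum_product]
    _ = ∑ f ∈ Finset.univ.filter (fun f : Fin r → n => Function.Injective f),
          (∏ i, dv (f i) * M i (f i)) * (M.submatrix id f).det := by
        refine Finset.sum_bij
          (fun p _ => en p.1.1 (Finset.mem_powersetCard_univ.mp p.1.2) ∘ p.2)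
          (fun p _ => ?_) (fun p _ q _ h => ?_) (fun f hf => ?_) (fun p _ => rfl)
        · exact Finset.mem_filter.mpr ⟨Finset.mem_univ _,
            (hinj _ _).comp p.2.injective⟩
        · -- injectivity
          have himg2 : ∀ (T : Finset n) (hT : T.card = r) (σ : Equiv.Perm (Fin r)),
              Finset.image (en T hT ∘ σ) Finset.univ = T := by
            intro T hT σ
            rw [← Finset.image_image, Finset.image_univ_equiv, himg]
          have h1 := himg2 p.1.1 (Finset.mem_powersetCard_univ.mp p.1.2) p.2
          have h2 := himg2 q.1.1 (Finset.mem_powersetCard_univ.mp q.1.2) q.2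
          have hT : p.1.1 = q.1.1 := by
            rw [← h1, ← h2]
            exact congrArg (fun f => Finset.image f Finset.univ) h
          obtain ⟨⟨T1, hT1⟩, σ1⟩ := p
          obtain ⟨⟨T2, hT2⟩, σ2⟩ := q
          dsimp only at hT h
          subst hT
          have hσ : σ1 = σ2 := by
            ext i
            exact congrArg Fin.val (hinj T1 (Finset.mem_powersetCard_univ.mp hT1) (congrFun h i))
          simp [hσ]
        · -- surjectivity
          simp only [Finset.mem_filter] at hf
          have hfi := hf.2
          set T : Finset n := Finset.image f Finset.univ with hTdef
          have hT : T.card = r := by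
            rw [hTdef, Finset.card_image_of_injective _ hfi, Finset.card_univ,
              Fintype.card_fin]
          set g := en T hT with hgdef
          have hgi := hinj T hT
          -- both f and g are bijections onto T
          have hFmem : ∀ i, f i ∈ T := fun i => Finset.mem_image_of_mem f (Finset.mem_univ i)
          have hGmem : ∀ i, g i ∈ T := hmem T hT
          let F : Fin r → T := fun i => ⟨f i, hFmem i⟩
          let G : Fin r → T := fun i => ⟨g i, hGmem i⟩
          have hFinj : Function.Injective F := fun a b hab =>
            hfi (congrArg Subtype.val hab)
          have hGinj : Function.Injective G := fun a b hab =>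
            hgi (congrArg Subtype.val hab)
          have hcard : Fintype.card T = Fintype.card (Fin r) := by
            simp [hT]
          have hFbij : Function.Bijective F :=
            (Fintype.bijective_iff_injective_and_card F).mpr ⟨hFinj, hcard.symm⟩
          have hGbij : Function.Bijective G :=
            (Fintype.bijective_iff_injective_and_card G).mpr ⟨hGinj, hcard.symm⟩
          refine ⟨⟨⟨T, Finset.mem_powersetCard_univ.mpr hT⟩,
            (Equiv.ofBijective F hFbij).trans (Equiv.ofBijective G hGbij).symm⟩,
            Finset.mem_product.mpr ⟨Finset.mem_attach _ _, Finset.mem_univ _⟩, ?_⟩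
          funext i
          show g ((Equiv.ofBijective G hGbij).symm (Equiv.ofBijective F hFbij i)) = f i
          have := Equiv.ofBijective_apply_symm_apply G hGbij (Equiv.ofBijective F hFbij i)
          exact congrArg Subtype.val this
    _ = ∑ f ∈ Finset.univ.filter (fun f : Fin r → n => Function.Injective f),
          (∏ i, dv (f i) * M i (f i)) * (M.submatrix id f).det := rfl

theorem tripleEntry {n : Type*} [Fintype n] [DecidableEq n] {r : ℕ}
    (M : Matrix (Fin r) n ℝ) (dv : n → ℝ) (p q : Fin r) :
    (M * Matrix.diagonal dv * Mᵀ) p q = ∑ k, M p k * dv k * M q k := by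
  simp only [Matrix.mul_apply, Matrix.transpose_apply]
  refine Finset.sum_congr rfl fun k _ => ?_
  rw [Finset.sum_eq_single k (fun j _ hj => by simp [Matrix.diagonal_apply_ne _ hj]) (by simp)]
  simp [Matrix.diagonal_apply_eq]

theorem gram_det_ne_zero {n : Type*} [Fintype n] [DecidableEq n] {r : ℕ}
    (x : Fin r → (n → ℝ)) (hx : LinearIndependent ℝ x) :
    (Matrix.of fun i j => ∑ k, x i k * x j k).det ≠ 0 := by
  intro h0
  set X : Matrix (Fin r) n ℝ := Matrix.of fun i k => x i k with hX
  have hGX : (Matrix.of fun i j => ∑ k, x i k * x j k) = X * Xᵀ := by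
    ext i j
    simp [Matrix.mul_apply, Matrix.transpose_apply, hX]
  obtain ⟨w, hw, hGw⟩ := Matrix.exists_mulVec_eq_zero_iff.mpr h0
  set u : n → ℝ := Xᵀ *ᵥ w with hu
  have hdot : u ⬝ᵥ u = 0 := by
    have : w ⬝ᵥ ((Matrix.of fun i j => ∑ k, x i k * x j k) *ᵥ w) = 0 := by
      rw [hGw]; simp
    rw [hGX, ← Matrix.mulVec_mulVec, Matrix.dotProduct_mulVec, ← Matrix.mulVec_transpose] at this
    exact this
  have hu0 : u = 0 := by
    funext k
    have hnn : ∀ k ∈ Finset.univ, 0 ≤ u k * u k := fun k _ => mul_self_nonneg _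
    have := (Finset.sum_eq_zero_iff_of_nonneg hnn).mp hdot k (Finset.mem_univ k)
    exact mul_self_eq_zero.mp this
  have hcomb : ∑ i, w i • x i = 0 := by
    funext k
    have huk : u k = 0 := congrFun hu0 k
    rw [hu] at huk
    simp only [Matrix.mulVec, dotProduct, Matrix.transpose_apply, hX,
      Matrix.of_apply] at huk
    simpa [Finset.sum_apply, mul_comm] using huk
  exact hw (funext fun i => Fintype.linearIndependent_iff.mp hx _ hcomb i)

end CBaux

/-- **Minimal-covolume rank-`r` subgroups of `aℤ^{2d}` are spanned by columns of `a`.**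
Writing `b` for the family of diagonal entries of `a`: (i) for any `r` linearly
independent vectors of `aℤ^{2d}`, the covolume of their span is at least the product of
the `r` smallest entries (i.e. the minimal value of `∏_{i ∈ s} b i` over `r`-element
index sets `s`); and (ii) this bound is attained by the integer span of the `r` columns
of `a` indexed by a minimizing `s`. -/
theorem smallest_covolume_subgroup (d r : ℕ) (hd : 1 ≤ d) (hr : 1 ≤ r) (hr2 : r ≤ 2 * d)
    (v : Fin d → ℝ) (hv : ∀ i, 0 < v i) :
    -- the multiset of diagonal entries of `a`
    ∀ b : Fin d ⊕ Fin d → ℝ, b = Sum.elim v (fun i => (v i)⁻¹) →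
    -- (i) lower bound for arbitrary rank-r subgroups
    ((∀ x : Fin r → (Fin d ⊕ Fin d → ℝ), LinearIndependent ℝ x →
      (∀ i, x i ∈ latticeSet (aDiag v)) →
      ∀ s : Finset (Fin d ⊕ Fin d), s.card = r →
        (∀ s' : Finset (Fin d ⊕ Fin d), s'.card = r → ∏ i ∈ s, b i ≤ ∏ i ∈ s', b i) →
        ∏ i ∈ s, b i ≤ covolSpec r x) ∧
    -- (ii) the bound is attained by r distinct columns of `a`
    (∀ s : Finset (Fin d ⊕ Fin d), s.card = r →
      (∀ s' : Finset (Fin d ⊕ Fin d), s'.card = r → ∏ i ∈ s, b i ≤ ∏ i ∈ s', b i) →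
      ∀ e : Fin r → (Fin d ⊕ Fin d), Function.Injective e → (∀ j, e j ∈ s) →
        LinearIndependent ℝ (fun j => b (e j) • (Pi.single (e j) (1 : ℝ) : Fin d ⊕ Fin d → ℝ)) ∧
        (∀ j, b (e j) • (Pi.single (e j) (1 : ℝ) : Fin d ⊕ Fin d → ℝ) ∈ latticeSet (aDiag v)) ∧
        covolSpec r (fun j => b (e j) • (Pi.single (e j) (1 : ℝ) : Fin d ⊕ Fin d → ℝ)) = ∏ i ∈ s, b i)) := by
  intro b hb
  have hbpos : ∀ k, 0 < b k := by
    intro k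
    cases k with
    | inl k => rw [hb]; exact hv k
    | inr k => rw [hb]; exact inv_pos.mpr (hv k)
  have haDiag : aDiag v = Matrix.diagonal b := by
    rw [aDiag, hb, Matrix.fromBlocks_diagonal]
  constructor
  · -- part (i)
    intro x hx hxmem s hs hmin
    choose m hm using hxmem
    set Mr : Matrix (Fin r) (Fin d ⊕ Fin d) ℝ := Matrix.of fun i k => ((m i k : ℤ) : ℝ) with hMr
    have hxk : ∀ i k, x i k = b k * Mr i k := by
      intro i k
      rw [hm i, haDiag]
      simp [Matrix.mulVec_diagonal, hMr]
    have hG : (Matrix.of fun i j => ∑ k, x i k * x j k)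
        = Mr * Matrix.diagonal (fun k => b k ^ 2) * Mrᵀ := by
      ext i j
      rw [tripleEntry]
      simp only [Matrix.of_apply]
      refine Finset.sum_congr rfl fun k _ => ?_
      rw [hxk i k, hxk j k]; ring
    set en : ∀ T : Finset (Fin d ⊕ Fin d), T.card = r → (Fin r → (Fin d ⊕ Fin d)) :=
      fun T hT i => ((T.equivFinOfCardEq hT).symm i : Fin d ⊕ Fin d) with hen
    have hen_inj : ∀ T hT, Function.Injective (en T hT) := by
      intro T hT a c h
      exact (T.equivFinOfCardEq hT).symm.injective (Subtype.ext h)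
    have hen_mem : ∀ T hT i, en T hT i ∈ T := fun T hT i =>
      ((T.equivFinOfCardEq hT).symm i).2
    have hsum := cb_diag Mr (fun k => b k ^ 2) en hen_inj hen_mem
    have hne : (Mr * Matrix.diagonal (fun k => b k ^ 2) * Mrᵀ).det ≠ 0 := by
      rw [← hG]; exact gram_det_ne_zero x hx
    obtain ⟨T, hTmem, hterm⟩ :=
      Finset.exists_ne_zero_of_sum_ne_zero (hsum ▸ hne)
    have hTcard : T.1.card = r := Finset.mem_powersetCard_univ.mp T.2
    set D0 := (Mr.submatrix id (en T.1 (Finset.mem_powersetCard_univ.mp T.2))).det with hD0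
    have hD0ne : D0 ≠ 0 := by
      intro h
      apply hterm
      rw [← hD0] at *
      rw [h]; ring
    -- D0 is an integer
    obtain ⟨z, hz⟩ : ∃ z : ℤ, D0 = (z : ℝ) := by
      refine ⟨((Matrix.of fun i k => m i k : Matrix (Fin r) (Fin d ⊕ Fin d) ℤ).submatrix id
        (en T.1 (Finset.mem_powersetCard_univ.mp T.2))).det, ?_⟩
      rw [hD0]
      rw [show Mr.submatrix id (en T.1 (Finset.mem_powersetCard_univ.mp T.2))
          = ((Matrix.of fun i k => m i k : Matrix (Fin r) (Fin d ⊕ Fin d) ℤ).submatrix id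
            (en T.1 (Finset.mem_powersetCard_univ.mp T.2))).map (Int.cast : ℤ → ℝ) from by
        ext i j; simp [hMr]]
      exact ((Int.castRingHom ℝ).map_det _).symm
    have hzne : z ≠ 0 := fun h => hD0ne (by rw [hz, h]; simp)
    have h1le : (1 : ℝ) ≤ D0 ^ 2 := by
      have : (1 : ℤ) ≤ z ^ 2 := by
        rcases hzne.lt_or_gt with h | h <;> nlinarith
      rw [hz, ← Int.cast_pow]
      exact_mod_cast this
    -- the term is at least (∏ s b)^2
    have hprodpos : (0 : ℝ) ≤ ∏ i ∈ s, b i := Finset.prod_nonneg fun i _ => (hbpos i).le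
    have hps : ∏ i ∈ s, b i ≤ ∏ k ∈ T.1, b k := hmin T.1 hTcard
    have hsq : (∏ i ∈ s, b i) ^ 2 ≤ ∏ k ∈ T.1, b k ^ 2 := by
      rw [Finset.prod_pow]
      exact pow_le_pow_left₀ hprodpos hps 2
    have hterm_ge : (∏ i ∈ s, b i) ^ 2 ≤ (∏ k ∈ T.1, b k ^ 2) * D0 ^ 2 := by
      calc (∏ i ∈ s, b i) ^ 2 = (∏ i ∈ s, b i) ^ 2 * 1 := by ring
        _ ≤ (∏ k ∈ T.1, b k ^ 2) * D0 ^ 2 :=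
          mul_le_mul hsq h1le one_pos.le (Finset.prod_nonneg fun k _ => sq_nonneg _)
    have hsum_ge : (∏ i ∈ s, b i) ^ 2 ≤ (Mr * Matrix.diagonal (fun k => b k ^ 2) * Mrᵀ).det := by
      rw [hsum]
      refine hterm_ge.trans (Finset.single_le_sum
        (f := fun T' : {x // x ∈ Finset.powersetCard r (Finset.univ : Finset (Fin d ⊕ Fin d))} =>
          (∏ k ∈ T'.1, b k ^ 2) *
            (Mr.submatrix id (en T'.1 (Finset.mem_powersetCard_univ.mp T'.2))).det ^ 2)
        (fun T' _ => mul_nonneg (Finset.prod_nonneg fun k _ => sq_nonneg _) (sq_nonneg _)) hTmem)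
    calc ∏ i ∈ s, b i = Real.sqrt ((∏ i ∈ s, b i) ^ 2) := (Real.sqrt_sq hprodpos).symm
      _ ≤ covolSpec r x := by
          rw [covolSpec, hG]
          exact Real.sqrt_le_sqrt hsum_ge
  · -- part (ii)
    intro s hs hmin e he hes
    have himg : Finset.image e Finset.univ = s := by
      refine Finset.eq_of_subset_of_card_le (fun a ha => ?_) ?_
      · obtain ⟨i, _, rfl⟩ := Finset.mem_image.mp ha
        exact hes i
      · rw [Finset.card_image_of_injective _ he, Finset.card_univ, Fintype.card_fin]
        exact hs.le
    refine ⟨?_, ?_, ?_⟩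
    · -- linear independence
      have h1 : LinearIndependent ℝ (fun j : Fin r => (Pi.single (e j) (1 : ℝ) :
          Fin d ⊕ Fin d → ℝ)) := by
        have h0 := (Pi.basisFun ℝ (Fin d ⊕ Fin d)).linearIndependent.comp e he
        have heq : (⇑(Pi.basisFun ℝ (Fin d ⊕ Fin d)) ∘ e)
            = fun j => (Pi.single (e j) (1:ℝ) : Fin d ⊕ Fin d → ℝ) := by
          funext j; simp [Function.comp, Pi.basisFun_apply]
        rwa [heq] at h0
      have h2 := h1.units_smul (fun j => Units.mk0 (b (e j)) (hbpos (e j)).ne')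
      convert h2 using 1
      funext j; simp [Pi.smul_apply, Units.smul_def]
    · -- membership
      intro j
      refine ⟨Pi.single (e j) 1, ?_⟩
      funext k
      rw [haDiag]
      simp only [Pi.smul_apply, Matrix.mulVec_diagonal, smul_eq_mul]
      by_cases hk : k = e j
      · subst hk; simp
      · simp [Pi.single_apply, hk, Ne.symm hk]
    · -- covolume value
      have hGram : (Matrix.of fun i j => ∑ k, (b (e i) • (Pi.single (e i) (1:ℝ) :
          Fin d ⊕ Fin d → ℝ)) k * (b (e j) • (Pi.single (e j) (1:ℝ) : Fin d ⊕ Fin d → ℝ)) k)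
          = Matrix.diagonal (fun j => b (e j) ^ 2) := by
        ext i j
        simp only [Matrix.of_apply, Pi.smul_apply, smul_eq_mul]
        by_cases hij : i = j
        · subst hij
          rw [Matrix.diagonal_apply_eq]
          rw [Finset.sum_eq_single (e i) (fun k _ hk => by simp [Pi.single_apply, hk]) (by simp)]
          simp [Pi.single_apply]; ring
        · rw [Matrix.diagonal_apply_ne _ hij]
          refine Finset.sum_eq_zero fun k _ => ?_
          by_cases hk : k = e i
          · subst hk
            have : e i ≠ e j := fun h => hij (he h)
            simp [Pi.single_apply, this]
          · simp [Pi.single_apply, hk]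
      rw [covolSpec]
      rw [show (Matrix.of fun i j => ∑ k, (fun j => b (e j) • (Pi.single (e j) (1:ℝ) :
          Fin d ⊕ Fin d → ℝ)) i k * (fun j => b (e j) • (Pi.single (e j) (1:ℝ) :
          Fin d ⊕ Fin d → ℝ)) j k) = Matrix.diagonal (fun j => b (e j) ^ 2) from hGram]
      rw [Matrix.det_diagonal]
      have : ∏ j, b (e j) ^ 2 = (∏ j, b (e j)) ^ 2 := by
        rw [Finset.prod_pow]
      rw [this, Real.sqrt_sq (Finset.prod_nonneg fun j _ => (hbpos (e j)).le)]
      rw [← himg, Finset.prod_image (fun a _ c _ h => he h)]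
end

section
/- Let d ≥ 1. There exists a number m(d) ≥ 2 such that N = N_{m(d)} · N_ℤ; that is, every element of N can be written as a product of an element of N all of whose entries have absolute value at most m(d) with an integer matrix belonging to N. -/
open Matrix

/-- The special orthogonal symplectic group `K = SO(2d) ∩ Sp(2d,ℝ)`. -/
noncomputable def Kset (d : ℕ) : Set (Mat d) :=
  {k | k ∈ Matrix.symplecticGroup (Fin d) ℝ ∧ kᵀ * k = 1 ∧ k.det = 1}

/-- The Siegel-type set `A_t` of positive diagonal symplectic matrices with
`a_i ≤ t a_{i+1}` and `a_d ≤ t`. -/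
noncomputable def Atset (d : ℕ) (t : ℝ) : Set (Mat d) :=
  {a | ∃ v : Fin d → ℝ, (∀ i, 0 < v i) ∧
    (∀ i : Fin d, ∀ h : i.val + 1 < d, v i ≤ t * v ⟨i.val + 1, h⟩) ∧
    (∀ h : 0 < d, v ⟨d - 1, by omega⟩ ≤ t) ∧ a = aDiag v}

/-- The unipotent upper-triangular symplectic group
`N = {[[N, M],[0, N⁻ᵀ]] : N unipotent upper triangular, N Mᵀ = M Nᵀ}`. -/
noncomputable def Nset (d : ℕ) : Set (Mat d) :=
  {n | ∃ N M : Matrix (Fin d) (Fin d) ℝ,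
    (∀ i, N i i = 1) ∧ (∀ i j : Fin d, j < i → N i j = 0) ∧
    N * Mᵀ = M * Nᵀ ∧ n = Matrix.fromBlocks N M 0 (N⁻¹)ᵀ}

/-- The subset `N_u ⊂ N` of matrices all of whose entries are bounded by `u`. -/
noncomputable def Nuset (d : ℕ) (u : ℝ) : Set (Mat d) :=
  {n | n ∈ Nset d ∧ ∀ i j, |n i j| ≤ u}

/-- The subring of real numbers that are integers. -/
noncomputable def intMat : Subring ℝ := (Int.castRingHom ℝ).range

/-!
An element of `N` is a pair `(N, M)` with `N` unitriangular and `N⁻¹ M` symmetric. Size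
reduction, as in lattice reduction, writes `N = B Q` with `B` unitriangular with entries in
`[-1, 1]` and `Q` integral unitriangular; then `B⁻¹ = adj B` has entries at most `d!`. The
symmetric matrix `S = B⁻¹ M Qᵀ` splits as `T + R` with `T = round S` integral and `|R| ≤ 1/2`, and
`[[N, M], [0, N⁻ᵀ]] = [[B, B R], [0, B⁻ᵀ]] · [[Q, T Q⁻ᵀ], [0, Q⁻ᵀ]]`: the first factor has entries
at most `d! + 2`, the second is integral.
-/

namespace Matrix

open Finset

section Unitriangular

variable {ι R : Type*} [LinearOrder ι] [CommRing R]

def IsUpperUnitriangular (A : Matrix ι ι R) : Prop :=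
  A.IsUpperTriangular ∧ ∀ i, A i i = 1

namespace IsUpperUnitriangular

variable {A B : Matrix ι ι R}

theorem map {S : Type*} [CommRing S] (hA : A.IsUpperUnitriangular) (f : R →+* S) :
    (A.map f).IsUpperUnitriangular :=
  ⟨hA.1.map f, fun i => by simp [hA.2]⟩

variable [Fintype ι]

theorem det_eq_one (hA : A.IsUpperUnitriangular) : A.det = 1 := by
  simp [det_of_isUpperTriangular hA.1, hA.2]

theorem isUnit_det (hA : A.IsUpperUnitriangular) : IsUnit A.det := by
  simp [hA.det_eq_one]

variable [LocallyFiniteOrderTop ι]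

theorem mul_apply (hA : A.IsUpperUnitriangular) (B : Matrix ι ι R) (i j : ι) :
    (A * B) i j = B i j + ∑ k ∈ Ioi i, A i k * B k j := by
  rw [Matrix.mul_apply, ← sum_subset (subset_univ (Ici i)), ← Ioi_insert,
    sum_insert notMem_Ioi_self, hA.2, one_mul]
  intro k _ hk
  rw [hA.1 (lt_of_not_ge (mem_Ici.not.1 hk)), zero_mul]

theorem mul_apply_self (hA : A.IsUpperUnitriangular) (hB : B.IsUpperTriangular) (i : ι) :
    (A * B) i i = B i i := by
  rw [hA.mul_apply, add_eq_left]
  exact sum_eq_zero fun k hk => by rw [hB (mem_Ioi.1 hk), mul_zero]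

theorem mul (hA : A.IsUpperUnitriangular) (hB : B.IsUpperUnitriangular) :
    (A * B).IsUpperUnitriangular :=
  ⟨hA.1.mul hB.1, fun i => by rw [hA.mul_apply_self hB.1, hB.2]⟩

theorem inv (hA : A.IsUpperUnitriangular) : A⁻¹.IsUpperUnitriangular := by
  have := A.invertibleOfIsUnitDet hA.isUnit_det
  have hinv : A⁻¹.IsUpperTriangular := blockTriangular_inv_of_blockTriangular hA.1
  refine ⟨hinv, fun i => ?_⟩
  rw [← hA.mul_apply_self hinv, mul_inv_of_invertible, one_apply_eq]

end IsUpperUnitriangular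

end Unitriangular

section SizeReduction

variable {ι : Type*} [LinearOrder ι] [LocallyFiniteOrderTop ι]

/-- Column `j` is built from the bottom up: entry `i` rounds off the part of `(A * P) i j`
already determined by the entries below it, so that `A * P` has entries in `[-1/2, 1/2]` above
the diagonal. -/
noncomputable def sizeReduction (A : Matrix ι ι ℝ) (i j : ι) : ℤ :=
  if j < i then 0 else if i = j then 1 else
    -round (∑ k ∈ (Ioi i).attach, A i k * sizeReduction A k j)
termination_by (Ioi i).card
decreasing_by exact card_lt_card (Ioi_ssubset_Ioi (mem_Ioi.1 k.2))

variable (A : Matrix ι ι ℝ) {i j : ι}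

theorem sizeReduction_of_gt (h : j < i) : sizeReduction A i j = 0 := by
  rw [sizeReduction, if_pos h]

theorem sizeReduction_self (i : ι) : sizeReduction A i i = 1 := by
  rw [sizeReduction, if_neg (lt_irrefl i), if_pos rfl]

theorem sizeReduction_of_lt (h : i < j) :
    sizeReduction A i j = -round (∑ k ∈ Ioi i, A i k * sizeReduction A k j) := by
  rw [sizeReduction, if_neg h.not_gt, if_neg h.ne, ← sum_attach (Ioi i)]

theorem isUpperUnitriangular_sizeReduction : (of (sizeReduction A)).IsUpperUnitriangular :=
  ⟨fun _ _ h => sizeReduction_of_gt A h, sizeReduction_self A⟩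

variable [Fintype ι]

theorem abs_mul_sizeReduction_le {A : Matrix ι ι ℝ} (hA : A.IsUpperUnitriangular) (i j : ι) :
    |(A * (of (sizeReduction A)).map (Int.cast : ℤ → ℝ)) i j| ≤ 1 := by
  have hsum_zero (l : ι) (hl : j ≤ l) :
      ∑ k ∈ Ioi l, A l k * (sizeReduction A k j : ℝ) = 0 :=
    sum_eq_zero fun k hk => by
      rw [sizeReduction_of_gt A (hl.trans_lt (mem_Ioi.1 hk)), Int.cast_zero, mul_zero]
  simp only [hA.mul_apply, map_apply, of_apply]
  rcases lt_trichotomy i j with h | rfl | h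
  · rw [sizeReduction_of_lt A h, Int.cast_neg, neg_add_eq_sub]
    exact (abs_sub_round _).trans (by norm_num)
  · simp [sizeReduction_self, hsum_zero i le_rfl]
  · simp [sizeReduction_of_gt A h, hsum_zero i h.le]

theorem IsUpperUnitriangular.exists_eq_mul_map_intCast {N : Matrix ι ι ℝ}
    (hN : N.IsUpperUnitriangular) :
    ∃ B : Matrix ι ι ℝ, ∃ Q P : Matrix ι ι ℤ, B.IsUpperUnitriangular ∧ (∀ i j, |B i j| ≤ 1) ∧
      Q.IsUpperUnitriangular ∧ Q * P = 1 ∧ N = B * Q.map (Int.cast : ℤ → ℝ) := by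
  set P := of (sizeReduction N)
  have hP : P.IsUpperUnitriangular := isUpperUnitriangular_sizeReduction N
  refine ⟨N * P.map Int.cast, P⁻¹, P, hN.mul (hP.map (Int.castRingHom ℝ)),
    abs_mul_sizeReduction_le hN, hP.inv, nonsing_inv_mul P hP.isUnit_det, ?_⟩
  rw [Matrix.mul_assoc, ← map_mul_intCast, mul_nonsing_inv P hP.isUnit_det,
    Matrix.map_one _ Int.cast_zero Int.cast_one, Matrix.mul_one]

end SizeReduction

section EntryBounds

open scoped Nat

theorem abs_mul_apply_le {l m n : Type*} [Fintype m] {A : Matrix l m ℝ} {B : Matrix m n ℝ}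
    {a b : ℝ} (hA : ∀ i k, |A i k| ≤ a) (hB : ∀ k j, |B k j| ≤ b) (i : l) (j : n) :
    |(A * B) i j| ≤ Fintype.card m * (a * b) := by
  rw [Matrix.mul_apply, ← nsmul_eq_mul]
  refine (abs_sum_le_sum_abs _ _).trans (sum_le_card_nsmul _ _ _ fun k _ => ?_)
  rw [abs_mul]
  exact mul_le_mul (hA i k) (hB k j) (abs_nonneg _) ((abs_nonneg _).trans (hA i k))

variable {ι : Type*} [Fintype ι]

theorem abs_adjugate_apply_le [DecidableEq ι] {A : Matrix ι ι ℝ} (hA : ∀ i j, |A i j| ≤ 1)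
    (i j : ι) :
    |A.adjugate i j| ≤ (Fintype.card ι)! := by
  rw [adjugate_apply]
  have hrow (k l : ι) : |A.updateRow j (Pi.single i 1) k l| ≤ 1 := by
    rw [updateRow_apply]
    split_ifs
    · rcases eq_or_ne l i with rfl | hl <;> simp [*]
    · exact hA k l
  simpa using det_le (abv := AbsoluteValue.abs) hrow

theorem IsUpperUnitriangular.abs_inv_apply_le [LinearOrder ι] {A : Matrix ι ι ℝ}
    (hA : A.IsUpperUnitriangular) (hAle : ∀ i j, |A i j| ≤ 1) (i j : ι) :
    |A⁻¹ i j| ≤ (Fintype.card ι)! := by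
  rw [inv_def, hA.det_eq_one, Ring.inverse_one, one_smul]
  exact abs_adjugate_apply_le hAle i j

end EntryBounds

section BlockAlgebra

variable {ι R : Type*} [Fintype ι] [DecidableEq ι] [CommRing R]

theorem fromBlocks_mul_fromBlocks_inv_transpose (A C X Y : Matrix ι ι R) :
    fromBlocks A X 0 (A⁻¹)ᵀ * fromBlocks C Y 0 (C⁻¹)ᵀ =
      fromBlocks (A * C) (A * Y + X * (C⁻¹)ᵀ) 0 ((A * C)⁻¹)ᵀ := by
  simp [fromBlocks_multiply, Matrix.mul_inv_rev, transpose_mul]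

theorem isSymm_inv_mul_mul_transpose {B Q M : Matrix ι ι R} (hB : IsUnit B.det)
    (h : B * Q * Mᵀ = M * (B * Q)ᵀ) : (B⁻¹ * M * Qᵀ).IsSymm := by
  have hBT : IsUnit Bᵀ.det := by rwa [det_transpose]
  calc (B⁻¹ * M * Qᵀ)ᵀ = B⁻¹ * (B * Q * Mᵀ) * (B⁻¹)ᵀ := by
        simp only [transpose_mul, transpose_transpose, Matrix.mul_assoc,
          nonsing_inv_mul_cancel_left _ _ hB]
    _ = B⁻¹ * M * Qᵀ := by
        rw [h, transpose_mul, transpose_nonsing_inv]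
        simp only [Matrix.mul_assoc, mul_nonsing_inv_cancel_right _ _ hBT]

theorem map_intCast_fromBlocks_of_mul_eq_one {Q P : Matrix ι ι ℤ} (hQP : Q * P = 1)
    (Y : Matrix ι ι ℤ) :
    (fromBlocks Q Y 0 Pᵀ).map (Int.cast : ℤ → ℝ) =
      fromBlocks (Q.map Int.cast) (Y.map Int.cast) 0 ((Q.map Int.cast)⁻¹)ᵀ := by
  have hQP' : Q.map (Int.cast : ℤ → ℝ) * P.map Int.cast = 1 := by
    rw [← map_mul_intCast, hQP, Matrix.map_one _ Int.cast_zero Int.cast_one]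
  rw [fromBlocks_map, transpose_map, Matrix.map_zero _ Int.cast_zero, inv_eq_right_inv hQP']

end BlockAlgebra

theorem exists_fromBlocks_eq_mul_map_intCast {ι : Type*} [Fintype ι] [DecidableEq ι]
    {B M : Matrix ι ι ℝ} {Q P : Matrix ι ι ℤ} (hB : IsUnit B.det) (hQP : Q * P = 1)
    (hM : B * Q.map Int.cast * Mᵀ = M * (B * Q.map Int.cast)ᵀ) :
    ∃ R : Matrix ι ι ℝ, ∃ Y : Matrix ι ι ℤ, R.IsSymm ∧ (∀ i j, |R i j| ≤ 1 / 2) ∧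
      Q * Yᵀ = Y * Qᵀ ∧
      fromBlocks (B * Q.map Int.cast) M 0 ((B * Q.map Int.cast)⁻¹)ᵀ =
        fromBlocks B (B * R) 0 (B⁻¹)ᵀ * (fromBlocks Q Y 0 Pᵀ).map (Int.cast : ℤ → ℝ) := by
  set Q' := Q.map (Int.cast : ℤ → ℝ)
  set P' := P.map (Int.cast : ℤ → ℝ)
  have hPQ' : P' * Q' = 1 := by
    rw [← map_mul_intCast, mul_eq_one_comm.1 hQP, Matrix.map_one _ Int.cast_zero Int.cast_one]
  set S := B⁻¹ * M * Q'ᵀ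
  have hS : S.IsSymm := isSymm_inv_mul_mul_transpose hB hM
  set T := S.map round
  have hT : T.IsSymm := hS.map round
  refine ⟨S - T.map Int.cast, T * Pᵀ, hS.sub (hT.map _), fun i j => abs_sub_round (S i j), ?_, ?_⟩
  · rw [transpose_mul, transpose_transpose, ← Matrix.mul_assoc, hQP, Matrix.mul_assoc,
      ← transpose_mul, hQP, hT.eq, transpose_one, Matrix.one_mul, Matrix.mul_one]
  · rw [map_intCast_fromBlocks_of_mul_eq_one hQP, fromBlocks_mul_fromBlocks_inv_transpose,
      map_mul_intCast, transpose_map, inv_eq_left_inv hPQ']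
    congr 1
    calc M = B * S * P'ᵀ := by
          rw [Matrix.mul_assoc, Matrix.mul_assoc, Matrix.mul_assoc,
            mul_nonsing_inv_cancel_left _ _ hB, ← transpose_mul, hPQ', transpose_one,
            Matrix.mul_one]
      _ = _ := by noncomm_ring

end Matrix

open scoped Nat

theorem fromBlocks_mem_Nset {d : ℕ} {N M : Matrix (Fin d) (Fin d) ℝ}
    (hN : N.IsUpperUnitriangular) (hNM : N * Mᵀ = M * Nᵀ) : fromBlocks N M 0 (N⁻¹)ᵀ ∈ Nset d :=
  ⟨N, M, hN.2, fun _ _ h => hN.1 h, hNM, rfl⟩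

theorem fromBlocks_mem_Nuset {d : ℕ} {N M : Matrix (Fin d) (Fin d) ℝ}
    (hN : N.IsUpperUnitriangular) (hNM : N * Mᵀ = M * Nᵀ) (hNle : ∀ i j, |N i j| ≤ 1)
    (hMle : ∀ i j, |M i j| ≤ d / 2) : fromBlocks N M 0 (N⁻¹)ᵀ ∈ Nuset d (d ! + 2) := by
  have hfac_pos : (1 : ℝ) ≤ d ! := by exact_mod_cast d.factorial_pos
  have hfac_ge : (d : ℝ) ≤ d ! := by exact_mod_cast d.self_le_factorial
  refine ⟨fromBlocks_mem_Nset hN hNM, ?_⟩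
  rintro (i | i) (j | j)
  · simpa using (hNle i j).trans (by linarith)
  · simpa using (hMle i j).trans (by linarith)
  · simp only [fromBlocks_apply₂₁, Matrix.zero_apply, abs_zero]
    positivity
  · simpa using (hN.abs_inv_apply_le hNle j i).trans (by simp)

theorem map_intCast_fromBlocks_mem_Nset {d : ℕ} {Q P Y : Matrix (Fin d) (Fin d) ℤ}
    (hQ : Q.IsUpperUnitriangular) (hQP : Q * P = 1) (hQY : Q * Yᵀ = Y * Qᵀ) :
    (fromBlocks Q Y 0 Pᵀ).map (Int.cast : ℤ → ℝ) ∈ Nset d := by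
  rw [map_intCast_fromBlocks_of_mul_eq_one hQP]
  refine fromBlocks_mem_Nset (hQ.map (Int.castRingHom ℝ)) ?_
  simpa only [map_mul_intCast, transpose_map] using congrArg (map · (Int.cast : ℤ → ℝ)) hQY

theorem N_eq_Nbounded_mul_NZ_general (d : ℕ) :
    ∃ m : ℝ, 2 ≤ m ∧
      ∀ n ∈ Nset d, ∃ n₁ ∈ Nuset d m, ∃ n₂ ∈ Nset d,
        (∀ i j, n₂ i j ∈ intMat) ∧ n = n₁ * n₂ := by
  refine ⟨d ! + 2, le_add_of_nonneg_left (Nat.cast_nonneg _), ?_⟩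
  rintro _ ⟨N, M, hdiag, htri, hNM, rfl⟩
  obtain ⟨B, Q, P, hB, hBle, hQ, hQP, rfl⟩ :=
    Matrix.IsUpperUnitriangular.exists_eq_mul_map_intCast ⟨fun i j h => htri i j h, hdiag⟩
  obtain ⟨R, Y, hR, hRle, hQY, hprod⟩ :=
    Matrix.exists_fromBlocks_eq_mul_map_intCast hB.isUnit_det hQP hNM
  have hBR : B * (B * R)ᵀ = B * R * Bᵀ := by rw [transpose_mul, hR.eq, Matrix.mul_assoc]
  have hBRle (i j : Fin d) : |(B * R) i j| ≤ d / 2 :=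
    (Matrix.abs_mul_apply_le hBle hRle i j).trans_eq (by rw [Fintype.card_fin]; ring)
  exact ⟨_, fromBlocks_mem_Nuset hB hBR hBle hBRle, _,
    map_intCast_fromBlocks_mem_Nset hQ hQP hQY, fun i j => ⟨_, rfl⟩, hprod⟩

/-- **Reduction theory for the unipotent group `N`:** there is `m = m(d) ≥ 2` such that
every element of `N` is a product of an element of `N_{m}` and an integer element of
`N`. -/
theorem N_eq_Nbounded_mul_NZ (d : ℕ) (hd : 1 ≤ d) :
    ∃ m : ℝ, 2 ≤ m ∧
      ∀ n ∈ Nset d, ∃ n₁ ∈ Nuset d m, ∃ n₂ ∈ Nset d,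
        (∀ i j, n₂ i j ∈ intMat) ∧ n = n₁ * n₂ :=
  N_eq_Nbounded_mul_NZ_general d
end

section
/- Let d ≥ 2. For a ∈ ℝ, x ∈ ℝ^{d−1}, y ∈ ℝ^{d−1} and a (d−1)×(d−1) matrix M, write 𝓜(a,x,y,M) for the d×d block matrix [[a, xᵀ],[y, M]]. (i) If a 2d×2d matrix of the form [[𝓜(a_1,x_1,0,M_1), 𝓜(a_2,x_2,x_3,M_2)],[0, *]] belongs to Sp(2d,ℝ), then the (2d−2)×(2d−2) matrix [[M_1, M_2],[0, M_1^{−ᵀ}]] belongs to Sp(2d−2,ℝ). (ii) If [[M_1, M_2],[M_3, M_4]] ∈ Sp(2d−2,ℝ), then the 2d×2d matrix [[𝓜(1,0,0,M_1), 𝓜(0,0,0,M_2)],[𝓜(0,0,0,M_3), 𝓜(1,0,0,M_4)]] belongs to Sp(2d,ℝ). -/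
/- Statement 12: projection and lifting of symplectic matrices between Sp(2d,ℝ) and
   Sp(2d−2,ℝ) via the block matrices 𝓜(a,x,y,M) = [[a, xᵀ],[y, M]]. -/

open Matrix


/-- The `d × d` block matrix `𝓜(a, x, y, M) = [[a, xᵀ], [y, M]]` with `a ∈ ℝ`,
`x, y ∈ ℝ^{d−1}` and `M` a `(d−1) × (d−1)` matrix. -/
noncomputable def blk (d : ℕ) (a : ℝ) (x y : Fin (d - 1) → ℝ)
    (M : Matrix (Fin (d - 1)) (Fin (d - 1)) ℝ) : Matrix (Fin d) (Fin d) ℝ :=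
  Matrix.of fun i j =>
    if hi : i.val = 0 then
      (if hj : j.val = 0 then a else x ⟨j.val - 1, by have := j.isLt; omega⟩)
    else
      (if hj : j.val = 0 then y ⟨i.val - 1, by have := i.isLt; omega⟩
       else M ⟨i.val - 1, by have := i.isLt; omega⟩ ⟨j.val - 1, by have := j.isLt; omega⟩)

section Helpers

variable {n : ℕ} {a b : ℝ} {x y x' y' : Fin (n + 1) → ℝ}
  {M N : Matrix (Fin (n + 1)) (Fin (n + 1)) ℝ}

lemma blk_zero_zero : blk (n + 2) a x y M 0 0 = a := by simp [blk]

lemma blk_zero_succ (j : Fin (n + 1)) : blk (n + 2) a x y M 0 j.succ = x j := by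
  simp [blk, Fin.succ]

lemma blk_succ_zero (i : Fin (n + 1)) : blk (n + 2) a x y M i.succ 0 = y i := by
  simp [blk, Fin.succ]

lemma blk_succ_succ (i j : Fin (n + 1)) : blk (n + 2) a x y M i.succ j.succ = M i j := by
  simp [blk, Fin.succ]

lemma mul_transpose_succ_succ (i j : Fin (n + 1)) :
    (blk (n + 2) a x y M * (blk (n + 2) b x' y' N)ᵀ) i.succ j.succ
      = y i * y' j + (M * Nᵀ) i j := by
  simp [mul_apply, Fin.sum_univ_succ, blk_succ_succ, blk_succ_zero, transpose_apply]

lemma blk_mul_transpose_blk :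
    blk (n + 2) a 0 0 M * (blk (n + 2) b 0 0 N)ᵀ = blk (n + 2) (a * b) 0 0 (M * Nᵀ) := by
  ext i j
  induction i using Fin.cases with
  | zero =>
    induction j using Fin.cases with
    | zero => simp [mul_apply, Fin.sum_univ_succ, blk_zero_zero, blk_zero_succ, blk_succ_zero]
    | succ j => simp [mul_apply, Fin.sum_univ_succ, blk_zero_zero, blk_zero_succ, blk_succ_zero,
        blk_succ_succ]
  | succ i =>
    induction j using Fin.cases with
    | zero => simp [mul_apply, Fin.sum_univ_succ, blk_zero_zero, blk_zero_succ, blk_succ_zero,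
        blk_succ_succ]
    | succ j => simp [mul_transpose_succ_succ, blk_succ_succ]

lemma blk_sub : blk (n + 2) a x y M - blk (n + 2) b x' y' N
    = blk (n + 2) (a - b) (x - x') (y - y') (M - N) := by
  ext i j
  simp only [Matrix.sub_apply, blk, of_apply, Pi.sub_apply]
  split <;> split <;> simp_all

lemma blk_one : blk (n + 2) 1 0 0 1 = (1 : Matrix (Fin (n + 2)) (Fin (n + 2)) ℝ) := by
  ext i j
  induction i using Fin.cases with
  | zero =>
    induction j using Fin.cases with
    | zero => simp [blk_zero_zero]
    | succ j => simp [blk_zero_succ, one_apply, (Fin.succ_ne_zero j).symm]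
  | succ i =>
    induction j using Fin.cases with
    | zero => simp [blk_succ_zero, one_apply, Fin.succ_ne_zero]
    | succ j => simp [blk_succ_succ, one_apply, Fin.succ_inj]

lemma blk_neg_one : blk (n + 2) (-1) 0 0 (-1) = (-1 : Matrix (Fin (n + 2)) (Fin (n + 2)) ℝ) := by
  have h0 : (0 : Fin (n + 1) → ℝ) = -0 := by simp
  have : blk (n + 2) (-1) (-0) (-0) (-1) = -(blk (n + 2) 1 0 0 1) := by
    ext i j
    simp only [Matrix.neg_apply, blk, of_apply, Pi.neg_apply]
    split <;> split <;> simp_all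
  rw [h0, this, blk_one]

lemma blk_zero : blk (n + 2) 0 0 0 0 = (0 : Matrix (Fin (n + 2)) (Fin (n + 2)) ℝ) := by
  ext i j
  simp only [blk, of_apply, Pi.zero_apply, Matrix.zero_apply]
  split <;> split <;> simp

end Helpers

/-- **Projection and lifting between `Sp(2d,ℝ)` and `Sp(2d−2,ℝ)`.**
(i) If `[[𝓜(a₁,x₁,0,M₁), 𝓜(a₂,x₂,x₃,M₂)],[0, ∗]]` is symplectic (for some block `∗`)
and `M₁` is invertible, then `[[M₁, M₂],[0, M₁⁻ᵀ]] ∈ Sp(2d−2,ℝ)`.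
(ii) If `[[M₁, M₂],[M₃, M₄]] ∈ Sp(2d−2,ℝ)`, then
`[[𝓜(1,0,0,M₁), 𝓜(0,0,0,M₂)],[𝓜(0,0,0,M₃), 𝓜(1,0,0,M₄)]] ∈ Sp(2d,ℝ)`. -/
theorem symplectic_projection_and_lifting (d : ℕ) (hd : 2 ≤ d) :
    (∀ (a₁ a₂ : ℝ) (x₁ x₂ x₃ : Fin (d - 1) → ℝ)
        (M₁ M₂ : Matrix (Fin (d - 1)) (Fin (d - 1)) ℝ)
        (B : Matrix (Fin d) (Fin d) ℝ),
      IsUnit M₁.det →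
      Matrix.fromBlocks (blk d a₁ x₁ 0 M₁) (blk d a₂ x₂ x₃ M₂) 0 B ∈
        Matrix.symplecticGroup (Fin d) ℝ →
      Matrix.fromBlocks M₁ M₂ 0 (M₁⁻¹)ᵀ ∈ Matrix.symplecticGroup (Fin (d - 1)) ℝ) ∧
    (∀ M₁ M₂ M₃ M₄ : Matrix (Fin (d - 1)) (Fin (d - 1)) ℝ,
      Matrix.fromBlocks M₁ M₂ M₃ M₄ ∈ Matrix.symplecticGroup (Fin (d - 1)) ℝ →
      Matrix.fromBlocks (blk d 1 0 0 M₁) (blk d 0 0 0 M₂) (blk d 0 0 0 M₃) (blk d 1 0 0 M₄) ∈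
        Matrix.symplecticGroup (Fin d) ℝ) := by
  obtain ⟨n, rfl⟩ : ∃ n, d = n + 2 := ⟨d - 2, by omega⟩
  constructor
  · intro a₁ a₂ x₁ x₂ x₃ M₁ M₂ B hdet h
    rw [SymplecticGroup.mem_iff] at h ⊢
    rw [Matrix.J, fromBlocks_transpose, fromBlocks_multiply, fromBlocks_multiply] at h ⊢
    simp only [Matrix.mul_zero, Matrix.zero_mul, Matrix.mul_one, Matrix.mul_neg,
      Matrix.one_mul, zero_add, add_zero, Matrix.neg_mul, transpose_zero, neg_zero] at h ⊢
    have E1 := congrArg Matrix.toBlocks₁₁ h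
    simp only [Matrix.toBlocks_fromBlocks₁₁] at E1
    have h1 : M₂ * M₁ᵀ + -(M₁ * M₂ᵀ) = 0 := by
      ext i j
      have := congrFun (congrFun E1 i.succ) j.succ
      simp only [Matrix.add_apply, Matrix.neg_apply, mul_transpose_succ_succ, Pi.zero_apply, mul_zero,
        zero_mul, zero_add, Matrix.zero_apply] at this
      simpa using this
    rw [h1, transpose_transpose, Matrix.mul_nonsing_inv _ hdet, ← transpose_mul,
      Matrix.mul_nonsing_inv _ hdet, transpose_one]
  · intro M₁ M₂ M₃ M₄ h
    rw [SymplecticGroup.mem_iff] at h ⊢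
    rw [Matrix.J, fromBlocks_transpose, fromBlocks_multiply, fromBlocks_multiply] at h ⊢
    simp only [Matrix.mul_zero, Matrix.zero_mul, Matrix.mul_one, Matrix.mul_neg,
      Matrix.one_mul, zero_add, add_zero, Matrix.neg_mul, transpose_zero, neg_zero,
      ← sub_eq_add_neg, ← neg_add_eq_sub] at h ⊢
    have e11 := congrArg Matrix.toBlocks₁₁ h
    have e12 := congrArg Matrix.toBlocks₁₂ h
    have e21 := congrArg Matrix.toBlocks₂₁ h
    have e22 := congrArg Matrix.toBlocks₂₂ h
    simp only [Matrix.toBlocks_fromBlocks₁₁, Matrix.toBlocks_fromBlocks₁₂,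
      Matrix.toBlocks_fromBlocks₂₁, Matrix.toBlocks_fromBlocks₂₂, neg_add_eq_sub] at e11 e12 e21 e22
    simp only [blk_mul_transpose_blk, neg_add_eq_sub, blk_sub, sub_zero, e11, e12, e21, e22]
    norm_num [blk_zero, blk_one, blk_neg_one]
end

section
/- Let d ≥ 1 and suppose g ∈ Sp(2d,ℝ) has Iwasawa decomposition g = k a n with k ∈ K, a = diag(a_1, a_2, …, a_d, a_1^{−1}, …, a_d^{−1}) ∈ A, and n ∈ N. If ‖g e_1‖ ≤ ‖g v‖ for every nonzero v ∈ ℤ^{2d} (where e_1 is the first standard basis vector and ‖·‖ the Euclidean norm), then a_1 / a_2 ≤ 2/√3. -/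
/- Statement 13: if g = k a n is the Iwasawa decomposition of g ∈ Sp(2d,ℝ) and g e_1 is
   a shortest nonzero vector of the lattice g ℤ^{2d}, then a_1/a_2 ≤ 2/√3. -/

open Matrix

/-- The Euclidean norm on `ℝ^{2d}`. -/
noncomputable def enorm2 {d : ℕ} (v : Fin d ⊕ Fin d → ℝ) : ℝ := Real.sqrt (∑ i, (v i) ^ 2)

/- The integer vector `m = c e₁ + e₂` is mapped by `a n` to `a₁ (c + n₁₂) e₁ + a₂ e₂`, since `n` is
unipotent upper triangular, and `k` is an isometry. Choosing `c` to be the integer nearest to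
`-n₁₂` gives `|c + n₁₂| ≤ 1/2`, so minimality of `‖g e₁‖ = a₁` yields `a₁² ≤ a₁²/4 + a₂²`,
that is `a₁/a₂ ≤ 2/√3`. -/

lemma enorm2_mulVec_of_transpose_mul_self {d : ℕ} {k : Mat d} (hk : kᵀ * k = 1)
    (y : Fin d ⊕ Fin d → ℝ) : enorm2 (k *ᵥ y) = enorm2 y := by
  have h : (k *ᵥ y) ⬝ᵥ (k *ᵥ y) = y ⬝ᵥ y := by
    rw [dotProduct_mulVec, ← vecMul_transpose, vecMul_vecMul, hk, vecMul_one]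
  simpa only [enorm2, dotProduct, pow_two] using congrArg Real.sqrt h

lemma enorm2_sumElim_zero {d : ℕ} (y : Fin d → ℝ) :
    enorm2 (Sum.elim y 0) = Real.sqrt (∑ i, y i ^ 2) := by
  simp [enorm2, Fintype.sum_sum_type]

lemma aDiag_mul_fromBlocks_mulVec_sumElim_zero {d : ℕ} (v : Fin d → ℝ)
    (N M Q : Matrix (Fin d) (Fin d) ℝ) (x : Fin d → ℝ) :
    (aDiag v * fromBlocks N M 0 Q) *ᵥ Sum.elim x 0 = Sum.elim (fun i => v i * (N *ᵥ x) i) 0 := by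
  rw [aDiag, fromBlocks_multiply, fromBlocks_mulVec]
  ext (i | i) <;> simp [← mulVec_mulVec, mulVec_diagonal]

lemma sum_sq_mul_single_add_single {ι : Type*} [Fintype ι] [DecidableEq ι] {i j : ι}
    (hij : i ≠ j) (v : ι → ℝ) (p q : ℝ) :
    ∑ l, (v l * (Pi.single i p + Pi.single j q : ι → ℝ) l) ^ 2 = (v i * p) ^ 2 + (v j * q) ^ 2 := by
  rw [Fintype.sum_eq_add i j hij fun l hl => by simp [hl.1, hl.2]]
  simp [hij, hij.symm]

lemma mulVec_single_zero_add_single_one_of_upper_unitriangular {d : ℕ} (hd : 1 < d)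
    {N : Matrix (Fin d) (Fin d) ℝ} (hdiag : ∀ i, N i i = 1) (htri : ∀ i j, j < i → N i j = 0)
    (a b : ℝ) :
    N *ᵥ (Pi.single ⟨0, by omega⟩ a + Pi.single ⟨1, hd⟩ b) =
      Pi.single ⟨0, by omega⟩ (a + N ⟨0, by omega⟩ ⟨1, hd⟩ * b) + Pi.single ⟨1, hd⟩ b := by
  ext i
  simp only [mulVec_add, mulVec_single, Pi.add_apply, Pi.single_apply]
  rcases i with ⟨_ | _ | i, hi⟩
  · simp [hdiag]
  · simp [hdiag, htri _ _ (show (⟨0, by omega⟩ : Fin d) < ⟨1, hd⟩ from Nat.zero_lt_one)]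
  · simp [htri _ _ (show (⟨0, by omega⟩ : Fin d) < ⟨i + 2, hi⟩ from by simp [Fin.lt_def]),
      htri _ _ (show (⟨1, hd⟩ : Fin d) < ⟨i + 2, hi⟩ from by simp [Fin.lt_def])]

lemma div_le_two_div_sqrt_three_of_sq_le {p q t : ℝ} (hp : 0 < p) (hq : 0 < q) (ht : |t| ≤ 1 / 2)
    (h : p ^ 2 ≤ (p * t) ^ 2 + q ^ 2) : p / q ≤ 2 / Real.sqrt 3 := by
  have ht2 : t ^ 2 ≤ 1 / 4 := by nlinarith [sq_abs t, abs_nonneg t]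
  have h34 : 3 * p ^ 2 ≤ 4 * q ^ 2 := by nlinarith [sq_nonneg p]
  have hs3 : Real.sqrt 3 ^ 2 = 3 := Real.sq_sqrt (by norm_num)
  rw [div_le_div_iff₀ hq (by positivity), ← pow_le_pow_iff_left₀ (by positivity) (by positivity)
    two_ne_zero, mul_pow, hs3]
  linarith

lemma enorm2_iwasawa_mulVec_single_zero_add_single_one {d : ℕ} (hd : 1 < d) {k : Mat d}
    (hk : kᵀ * k = 1) (v : Fin d → ℝ) {N M Q : Matrix (Fin d) (Fin d) ℝ} (hdiag : ∀ i, N i i = 1) (htri : ∀ i j, j < i → N i j = 0)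
    (a b : ℝ) :
    enorm2 ((k * aDiag v * fromBlocks N M 0 Q) *ᵥ
        Sum.elim (Pi.single ⟨0, by omega⟩ a + Pi.single ⟨1, hd⟩ b) 0) =
      Real.sqrt ((v ⟨0, by omega⟩ * (a + N ⟨0, by omega⟩ ⟨1, hd⟩ * b)) ^ 2 + (v ⟨1, hd⟩ * b) ^ 2) := by
  rw [mul_assoc, ← mulVec_mulVec, enorm2_mulVec_of_transpose_mul_self hk,
    aDiag_mul_fromBlocks_mulVec_sumElim_zero, enorm2_sumElim_zero,
    mulVec_single_zero_add_single_one_of_upper_unitriangular hd hdiag htri,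
    sum_sq_mul_single_add_single (by simp [Fin.ext_iff])]

/-- **Shortest vectors pinch the first two Iwasawa diagonal entries:** if `g = k a n`
with `k ∈ K`, `a = diag(a_1,…,a_d,a_1⁻¹,…,a_d⁻¹)` positive, `n ∈ N`, and
`‖g e_1‖ ≤ ‖g v‖` for all nonzero `v ∈ ℤ^{2d}`, then `a_1/a_2 ≤ 2/√3`. -/
theorem iwasawa_shortest_vector_ratio (d : ℕ) (hd : 2 ≤ d)
    (g k n : Mat d) (v : Fin d → ℝ)
    (hk : k ∈ Kset d) (hv : ∀ i, 0 < v i) (hn : n ∈ Nset d)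
    (hiwa : g = k * aDiag v * n)
    (hshort : ∀ m : Fin d ⊕ Fin d → ℤ, (fun i => (m i : ℝ)) ≠ 0 →
      enorm2 (g.mulVec fun i => ((Pi.single (Sum.inl (⟨0, by omega⟩ : Fin d)) 1 : Fin d ⊕ Fin d → ℤ) i : ℝ))
        ≤ enorm2 (g.mulVec fun i => (m i : ℝ))) :
    v ⟨0, by omega⟩ / v ⟨1, by omega⟩ ≤ 2 / Real.sqrt 3 := by
  obtain ⟨N, M, hdiag, htri, -, rfl⟩ := hn
  subst hiwa
  set i₀ : Fin d := ⟨0, by omega⟩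
  set i₁ : Fin d := ⟨1, by omega⟩
  have hnorm := enorm2_iwasawa_mulVec_single_zero_add_single_one (by omega) hk.2.1 v
    (M := M) (Q := (N⁻¹)ᵀ) hdiag htri
  set c : ℤ := -round (N i₀ i₁)
  have he₁ : (fun i => ((Pi.single (Sum.inl i₀) 1 : Fin d ⊕ Fin d → ℤ) i : ℝ)) =
      Sum.elim (Pi.single i₀ 1 + Pi.single i₁ 0) (0 : Fin d → ℝ) := by
    ext (i | i) <;> simp [Pi.single_apply]
  have hm : (fun i => ((Sum.elim (Pi.single i₀ c + Pi.single i₁ 1) 0 : Fin d ⊕ Fin d → ℤ) i : ℝ)) =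
      Sum.elim (Pi.single i₀ (c : ℝ) + Pi.single i₁ 1) (0 : Fin d → ℝ) := by
    ext (i | i) <;> simp [Pi.single_apply]
  have hshort := hshort _ (by
    rw [hm]; intro h
    simpa [i₀, i₁, Fin.ext_iff] using congrFun h (Sum.inl i₁))
  rw [he₁, hm, hnorm, hnorm, Real.sqrt_le_sqrt_iff (by positivity)] at hshort
  refine div_le_two_div_sqrt_three_of_sq_le (hv i₀) (hv i₁) (t := c + N i₀ i₁) ?_ (by simpa using hshort)
  simpa [c, abs_sub_comm, sub_eq_neg_add] using abs_sub_round (N i₀ i₁)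
end

section
/- Let d ≥ 1 and T > 1. The Lebesgue measure of Ω_T equals (σ_{d−1}² · (2^d − 1) / d) · log T, where σ_{d−1} denotes the surface measure of the unit sphere S^{d−1} ⊂ ℝ^d. -/
/- Statement 18: Vol(Ω_T) = σ_{d−1}² (2^d − 1)/d · log T, where σ_{d−1} is the surface
   measure of the unit sphere S^{d−1} ⊂ ℝ^d (realized as the total mass of the canonical
   sphere measure `volume.toSphere` on the unit sphere of Euclidean ℝ^d). -/

open Matrix MeasureTheory

/-- The Euclidean norm on `ℝ^d`. -/
noncomputable def enorm' {d : ℕ} (v : Fin d → ℝ) : ℝ := Real.sqrt (∑ i, (v i) ^ 2)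

/-- The region `Ω_T = {(x,y) : 1 ≤ ‖x‖·‖y‖ ≤ 2, 1 ≤ ‖y‖ < T} ⊂ ℝ^d × ℝ^d`. -/
noncomputable def OmegaT (d : ℕ) (T : ℝ) : Set (Fin d ⊕ Fin d → ℝ) :=
  {v | 1 ≤ enorm' (fun i => v (Sum.inl i)) * enorm' (fun i => v (Sum.inr i)) ∧
       enorm' (fun i => v (Sum.inl i)) * enorm' (fun i => v (Sum.inr i)) ≤ 2 ∧
       1 ≤ enorm' (fun i => v (Sum.inr i)) ∧ enorm' (fun i => v (Sum.inr i)) < T}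


/-- The surface measure `σ_{d−1}` of the unit sphere `S^{d−1} ⊂ ℝ^d`. -/
noncomputable def sphereMeasure (d : ℕ) : ℝ :=
  (((volume : Measure (EuclideanSpace ℝ (Fin d))).toSphere) Set.univ).toReal

open Set Metric
open scoped ENNReal

section Aux

/-- Polar-coordinate computation of the Lebesgue integral of a function of the norm. -/
lemma lintegral_fun_norm_polar {E : Type*} [NormedAddCommGroup E] [NormedSpace ℝ E]
    [MeasurableSpace E] [BorelSpace E] [FiniteDimensional ℝ E] [Nontrivial E]
    (μ : Measure E) [μ.IsAddHaarMeasure] (g : ℝ → ℝ≥0∞) (hg : Measurable g) :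
    ∫⁻ x, g ‖x‖ ∂μ = μ.toSphere univ *
      ∫⁻ r in Ioi (0:ℝ), ENNReal.ofReal (r ^ (Module.finrank ℝ E - 1)) * g r := by
  have h0 : ∫⁻ x, g ‖x‖ ∂μ = ∫⁻ x : ({(0:E)}ᶜ : Set E), g ‖x.1‖ ∂(Measure.comap Subtype.val μ) := by
    rw [lintegral_subtype_comap (measurableSet_singleton (0:E)).compl (fun a => g ‖a‖),
      restrict_compl_singleton]
  have h1 := (μ.measurePreserving_homeomorphUnitSphereProd).lintegral_comp
      (f := fun p : sphere (0:E) 1 × Ioi (0:ℝ) => g p.2) (hg.comp (measurable_snd.subtype_val))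
  simp only [homeomorphUnitSphereProd_apply_snd_coe] at h1
  have h2 : ∫⁻ y : Ioi (0:ℝ), g y.1 ∂(Measure.volumeIoiPow (Module.finrank ℝ E - 1)) =
      ∫⁻ r in Ioi (0:ℝ), ENNReal.ofReal (r ^ (Module.finrank ℝ E - 1)) * g r := by
    rw [Measure.volumeIoiPow,
      lintegral_withDensity_eq_lintegral_mul _
        ((measurable_subtype_coe.pow_const _).ennreal_ofReal)
        (show Measurable fun y : Ioi (0:ℝ) => g y.1 from hg.comp measurable_subtype_coe),
      ← lintegral_subtype_comap measurableSet_Ioi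
        (fun r => ENNReal.ofReal (r ^ (Module.finrank ℝ E - 1)) * g r)]
    rfl
  rw [h0, h1,
    lintegral_prod (fun p : sphere (0:E) 1 × Ioi (0:ℝ) => g p.2)
      ((show Measurable fun p : sphere (0:E) 1 × Ioi (0:ℝ) => g p.2 from
        hg.comp (measurable_snd.subtype_val)).aemeasurable)]
  simp only [lintegral_const, h2]
  rw [mul_comm]

/-- The radial integral that produces the logarithm. -/
lemma key_integral (d : ℕ) (hd : 1 ≤ d) (T : ℝ) (hT : 1 < T) :
    ∫⁻ r in Ioi (0:ℝ), ENNReal.ofReal (r ^ (d-1)) *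
        (Ico (1:ℝ) T).indicator (fun s => ENNReal.ofReal ((2^d - 1) / s^d)) r
      = ENNReal.ofReal ((2^d - 1) * Real.log T) := by
  have h2d : (0:ℝ) ≤ 2^d - 1 := by
    have : (1:ℝ) ≤ 2^d := one_le_pow₀ (by norm_num)
    linarith
  have hsub : Ico (1:ℝ) T ⊆ Ioi 0 := fun x hx => lt_of_lt_of_le one_pos hx.1
  have hind : ∀ r : ℝ, ENNReal.ofReal (r ^ (d-1)) *
      (Ico (1:ℝ) T).indicator (fun s => ENNReal.ofReal ((2^d - 1) / s^d)) r
      = (Ico (1:ℝ) T).indicator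
          (fun s => ENNReal.ofReal (s ^ (d-1)) * ENNReal.ofReal ((2^d - 1) / s^d)) r := by
    intro r; by_cases h : r ∈ Ico (1:ℝ) T <;> simp [h]
  simp only [hind]
  rw [lintegral_indicator measurableSet_Ico _, Measure.restrict_restrict measurableSet_Ico,
    inter_eq_left.mpr hsub]
  have hcongr : ∫⁻ r in Ico (1:ℝ) T,
      ENNReal.ofReal (r ^ (d-1)) * ENNReal.ofReal ((2^d - 1) / r^d)
      = ∫⁻ r in Ico (1:ℝ) T, ENNReal.ofReal (2^d - 1) * ENNReal.ofReal r⁻¹ := by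
    refine setLIntegral_congr_fun measurableSet_Ico ?_
    intro r hr; beta_reduce
    have hr0 : (0:ℝ) < r := lt_of_lt_of_le one_pos hr.1
    rw [← ENNReal.ofReal_mul (by positivity), ← ENNReal.ofReal_mul h2d]
    congr 1
    have hpow : r ^ d = r ^ (d-1) * r := by
      conv_lhs => rw [show d = (d-1)+1 from (Nat.succ_pred_eq_of_pos hd).symm]
      rw [pow_succ]
    rw [hpow]
    field_simp
  rw [hcongr, lintegral_const_mul _ (measurable_inv.ennreal_ofReal)]
  have hlog : ∫⁻ r in Ico (1:ℝ) T, ENNReal.ofReal r⁻¹ = ENNReal.ofReal (Real.log T) := by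
    rw [Measure.restrict_congr_set Ico_ae_eq_Ioc]
    have hint : IntegrableOn (fun x : ℝ => x⁻¹) (Ioc 1 T) volume := by
      refine ((continuousOn_inv₀.mono ?_).integrableOn_Icc).mono_set Ioc_subset_Icc_self
      intro x hx; have h1 : (1:ℝ) ≤ x := hx.1; simp only [mem_compl_iff, mem_singleton_iff]
      intro h; rw [h] at h1; linarith
    have hnn : 0 ≤ᵐ[volume.restrict (Ioc (1:ℝ) T)] fun x : ℝ => x⁻¹ := by
      filter_upwards [ae_restrict_mem measurableSet_Ioc] with x hx
      have := hx.1; positivity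
    rw [← ofReal_integral_eq_lintegral_ofReal hint hnn]
    congr 1
    rw [← intervalIntegral.integral_of_le hT.le, integral_inv (by
      intro h
      rcases h with ⟨h1, _⟩
      simp only [inf_le_iff] at h1
      rcases h1 with h | h <;> linarith), div_one]
  rw [hlog, ← ENNReal.ofReal_mul h2d]

end Aux

/-- **The volume of `Ω_T`:** for `T > 1`,
`Vol(Ω_T) = σ_{d−1}² (2^d − 1) / d · log T`. -/
theorem volume_OmegaT (d : ℕ) (hd : 1 ≤ d) (T : ℝ) (hT : 1 < T) :
    volume (OmegaT d T) =
      ENNReal.ofReal ((sphereMeasure d) ^ 2 * (2 ^ d - 1) / d * Real.log T) := by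
  classical
  haveI : Nonempty (Fin d) := ⟨⟨0, hd⟩⟩
  haveI : Nontrivial (EuclideanSpace ℝ (Fin d)) :=
    (WithLp.equiv 2 (Fin d → ℝ)).nontrivial
  have h2d : (0:ℝ) ≤ 2^d - 1 := by
    have : (1:ℝ) ≤ 2^d := one_le_pow₀ (by norm_num)
    linarith
  have hlogT : (0:ℝ) ≤ Real.log T := Real.log_nonneg hT.le
  have hnorm : ∀ x : EuclideanSpace ℝ (Fin d), enorm' (fun i => x i) = ‖x‖ := by
    intro x
    rw [EuclideanSpace.norm_eq]
    unfold enorm'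
    congr 1
    refine Finset.sum_congr rfl fun i _ => ?_
    rw [Real.norm_eq_abs, sq_abs]
  -- the corresponding set in `E × E`
  set S : Set (EuclideanSpace ℝ (Fin d) × EuclideanSpace ℝ (Fin d)) :=
    {p | 1 ≤ ‖p.1‖ * ‖p.2‖ ∧ ‖p.1‖ * ‖p.2‖ ≤ 2 ∧ 1 ≤ ‖p.2‖ ∧ ‖p.2‖ < T} with hSdef
  have hS : MeasurableSet S := by
    have hm1 : Measurable fun p : EuclideanSpace ℝ (Fin d) × EuclideanSpace ℝ (Fin d) =>
        ‖p.1‖ * ‖p.2‖ := measurable_fst.norm.mul measurable_snd.norm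
    have hm2 : Measurable fun p : EuclideanSpace ℝ (Fin d) × EuclideanSpace ℝ (Fin d) =>
        ‖p.2‖ := measurable_snd.norm
    rw [hSdef]
    simp only [Set.setOf_and]
    exact (measurableSet_le measurable_const hm1).inter
      ((measurableSet_le hm1 measurable_const).inter
        ((measurableSet_le measurable_const hm2).inter (measurableSet_lt hm2 measurable_const)))
  -- transfer from the pi-type to the product of Euclidean spaces
  set e : (Fin d ⊕ Fin d → ℝ) ≃ᵐ (EuclideanSpace ℝ (Fin d) × EuclideanSpace ℝ (Fin d)) :=
    (MeasurableEquiv.sumPiEquivProdPi (fun _ => ℝ)).trans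
      (MeasurableEquiv.prodCongr (MeasurableEquiv.toLp 2 (Fin d → ℝ))
        (MeasurableEquiv.toLp 2 (Fin d → ℝ))) with he_def
  have he : MeasurePreserving e volume volume := by
    have h1 : MeasurePreserving (MeasurableEquiv.sumPiEquivProdPi (fun _ : Fin d ⊕ Fin d => ℝ))
        volume volume :=
      (volume_measurePreserving_sumPiEquivProdPi_symm (fun _ : Fin d ⊕ Fin d => ℝ)).symm _
    have h2 := ((EuclideanSpace.volume_preserving_symm_measurableEquiv_toLp (Fin d)).symm).prod
        ((EuclideanSpace.volume_preserving_symm_measurableEquiv_toLp (Fin d)).symm)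
    exact h2.comp h1
  have hpre : ⇑e ⁻¹' S = OmegaT d T := by
    ext v
    simp only [Set.mem_preimage, hSdef, Set.mem_setOf_eq, OmegaT]
    rw [show (enorm' fun i => v (Sum.inl i)) = ‖(e v).1‖ from hnorm (e v).1,
      show (enorm' fun i => v (Sum.inr i)) = ‖(e v).2‖ from hnorm (e v).2]
  have hvol : volume (OmegaT d T) = volume S := by
    rw [← hpre]
    exact he.measure_preimage hS.nullMeasurableSet
  have hB : volume (ball (0 : EuclideanSpace ℝ (Fin d)) 1) ≠ ⊤ := measure_ball_lt_top.ne
  set g : ℝ → ℝ≥0∞ := fun s =>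
    (Ico (1:ℝ) T).indicator (fun s => ENNReal.ofReal ((2^d - 1) / s^d)) s *
      volume (ball (0 : EuclideanSpace ℝ (Fin d)) 1) with hgdef
  have hgm : Measurable g := by
    refine Measurable.mul_const ?_ _
    exact Measurable.indicator
      ((measurable_const.div (measurable_id.pow_const d)).ennreal_ofReal) measurableSet_Ico
  have hsec : ∀ y : EuclideanSpace ℝ (Fin d), volume ((fun x => (x, y)) ⁻¹' S) = g ‖y‖ := by
    intro y
    by_cases hy : 1 ≤ ‖y‖ ∧ ‖y‖ < T
    · have hy0 : (0:ℝ) < ‖y‖ := lt_of_lt_of_le one_pos hy.1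
      have hset : ((fun x : EuclideanSpace ℝ (Fin d) => (x, y)) ⁻¹' S) =
          closedBall (0 : EuclideanSpace ℝ (Fin d)) (2/‖y‖) \
            ball (0 : EuclideanSpace ℝ (Fin d)) (1/‖y‖) := by
        ext x
        simp only [Set.mem_preimage, hSdef, Set.mem_setOf_eq, Set.mem_diff,
          mem_closedBall, mem_ball, dist_zero_right, not_lt, le_div_iff₀ hy0, div_le_iff₀ hy0]
        constructor
        · rintro ⟨a, b, _, _⟩; exact ⟨b, a⟩
        · rintro ⟨a, b⟩; exact ⟨b, a, hy.1, hy.2⟩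
      rw [hset, measure_diff
          ((ball_subset_ball ((div_le_div_iff_of_pos_right hy0).mpr one_le_two)).trans ball_subset_closedBall)
          measurableSet_ball.nullMeasurableSet measure_ball_lt_top.ne,
        Measure.addHaar_closedBall volume (0 : EuclideanSpace ℝ (Fin d))
          (by positivity : (0:ℝ) ≤ 2/‖y‖),
        Measure.addHaar_ball volume (0 : EuclideanSpace ℝ (Fin d))
          (by positivity : (0:ℝ) ≤ 1/‖y‖),
        finrank_euclideanSpace_fin]
      simp only [hgdef]
      rw [Set.indicator_of_mem (Set.mem_Ico.mpr ⟨hy.1, hy.2⟩)]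
      rw [← ENNReal.sub_mul (fun _ _ => hB)]
      congr 1
      rw [← ENNReal.ofReal_sub _ (by positivity)]
      congr 1
      rw [div_pow, div_pow, one_pow, div_sub_div_same]
    · have hset : ((fun x : EuclideanSpace ℝ (Fin d) => (x, y)) ⁻¹' S) = ∅ := by
        ext x
        simp only [Set.mem_preimage, hSdef, Set.mem_setOf_eq, Set.mem_empty_iff_false,
          iff_false, not_and]
        intro _ _ h1 h2
        exact hy ⟨h1, h2⟩
      rw [hset, measure_empty]
      simp only [hgdef]
      rw [Set.indicator_of_notMem (fun h => hy ⟨h.1, h.2⟩), zero_mul]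
  rw [hvol, Measure.volume_eq_prod _ _, Measure.prod_apply_symm hS, lintegral_congr hsec,
    lintegral_fun_norm_polar volume g hgm, finrank_euclideanSpace_fin]
  simp only [hgdef, ← mul_assoc]
  rw [lintegral_mul_const _ (show Measurable fun r : ℝ =>
      ENNReal.ofReal (r ^ (d-1)) *
        (Ico (1:ℝ) T).indicator (fun s => ENNReal.ofReal ((2^d - 1) / s^d)) r from
    ((measurable_id.pow_const _).ennreal_ofReal).mul
      (Measurable.indicator ((measurable_const.div (measurable_id.pow_const d)).ennreal_ofReal)
        measurableSet_Ico)),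
    key_integral d hd T hT]
  -- final arithmetic
  have hσ : (volume : Measure (EuclideanSpace ℝ (Fin d))).toSphere Set.univ =
      (d : ℝ≥0∞) * volume (ball (0 : EuclideanSpace ℝ (Fin d)) 1) := by
    rw [Measure.toSphere_apply_univ, finrank_euclideanSpace_fin]
  set b := (volume (ball (0 : EuclideanSpace ℝ (Fin d)) 1)).toReal with hbdef
  have hb0 : (0:ℝ) ≤ b := ENNReal.toReal_nonneg
  have hBb : volume (ball (0 : EuclideanSpace ℝ (Fin d)) 1) = ENNReal.ofReal b :=
    (ENNReal.ofReal_toReal hB).symm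
  have hsm : sphereMeasure d = d * b := by
    unfold sphereMeasure
    rw [hσ, ENNReal.toReal_mul]
    simp [hbdef]
  have hd0 : (d:ℝ) ≠ 0 := Nat.cast_ne_zero.mpr (by omega)
  rw [hσ, hBb, hsm,
    show ((d : ℝ≥0∞)) = ENNReal.ofReal (d:ℝ) by simp,
    ← ENNReal.ofReal_mul (by positivity),
    ← ENNReal.ofReal_mul (by positivity),
    ← ENNReal.ofReal_mul (by positivity)]
  congr 1
  field_simp
end
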